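/- Let p₀ be a probability density on ℝ^d, let r : ℝ^d → [0,∞) be measurable with 0 < ∫ r(x) p₀(x) dx < ∞, and let R > 0 satisfy ∫_{‖x‖₂ < R} p₀^r(x) dx > 1/2. There exists a universal constant C > 0 (independent of d, p₀, r, R, u, v, y) such that for all 0 < u < v < 1 with (1−u)·v/(v−u) ≥ e and all y ∈ ℝ^d: ∫_{ℝ^d} ‖y − √(u/v)·y′‖₂ · B^r(y′|y) dy′ ≤ C·√(1 − u/v) · ( (‖y‖₂ + √u·R)/√(1−u) + √( d·log((1−u)·v/(v−u)) ) ), where B^r(y′|y) := q_v^r(y′)·K(y|y′)/q_u^r(y) with K(y|y′) := (2π(1−u/v))^{−d/2} exp(−‖y − √(u/v)·y′‖₂²/(2(1−u/v))). -/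

import Mathlib

open MeasureTheory Real

/-- The Gaussian kernel `G_t(y,x) = (2π(1−t))^{−d/2} exp(−‖y−√t·x‖²/(2(1−t)))`. -/
noncomputable def gaussKernel (d : ℕ) (t : ℝ) (y x : EuclideanSpace ℝ (Fin d)) : ℝ :=
  (2 * π * (1 - t)) ^ (-(d : ℝ) / 2) *
    Real.exp (-‖y - Real.sqrt t • x‖ ^ 2 / (2 * (1 - t)))

/-- The smoothed density `q_t(y) = ∫ p₀(x) G_t(y,x) dx`. -/
noncomputable def smoothed (d : ℕ) (p₀ : EuclideanSpace ℝ (Fin d) → ℝ) (t : ℝ)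
    (y : EuclideanSpace ℝ (Fin d)) : ℝ :=
  ∫ x, p₀ x * gaussKernel d t y x

/-- The posterior density `π_t(x|y) = p₀(x) G_t(y,x)/q_t(y)`. -/
noncomputable def post (d : ℕ) (p₀ : EuclideanSpace ℝ (Fin d) → ℝ) (t : ℝ)
    (x y : EuclideanSpace ℝ (Fin d)) : ℝ :=
  p₀ x * gaussKernel d t y x / smoothed d p₀ t y

/-- The conditional reward `ρ_t(y) = ∫ r(x) π_t(x|y) dx`. -/
noncomputable def condReward (d : ℕ) (p₀ r : EuclideanSpace ℝ (Fin d) → ℝ) (t : ℝ)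
    (y : EuclideanSpace ℝ (Fin d)) : ℝ :=
  ∫ x, r x * post d p₀ t x y

/-- The reward-reweighted density `p₀^r(x) = r(x)p₀(x)/∫ r p₀`. -/
noncomputable def reweighted (d : ℕ) (p₀ r : EuclideanSpace ℝ (Fin d) → ℝ)
    (x : EuclideanSpace ℝ (Fin d)) : ℝ :=
  r x * p₀ x / ∫ x', r x' * p₀ x'

/-- A probability density on `ℝ^d`: measurable, nonnegative, integrating to one. -/
def IsDensity {d : ℕ} (p : EuclideanSpace ℝ (Fin d) → ℝ) : Prop :=
  Measurable p ∧ (∀ x, 0 ≤ p x) ∧ ∫ x, p x = 1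

/-!
Write `s = u / v`, `q_t` for the smoothed reweighted density and `M = ‖y‖ + √u R`. Completing the
square gives the Chapman–Kolmogorov identity `∫ G_v(y', x) G_s(y, y') dy' = G_u(y, x)`, hence
`∫ q_v(y') G_s(y, y') dy' = q_u(y)`, while `∫ q_v = 1`. Since `t ↦ t exp(-t² / 2(1-s))` decreases
on `[√(1-s), ∞)`, for every `T ≥ √(1-s)` the weighted kernel `‖y - √s y'‖ G_s(y, y')` is at most
`T G_s(y, y') + T c_T`, with `c_T` the value of `G_s` at distance `T`; integrating against `q_v`
bounds the numerator by `T q_u(y) + T c_T`. At least half of the reweighted mass lies in the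
ball of radius `R`, so `q_u(y) ≥ (2π(1-u))^(-d/2) exp(-M² / 2(1-u)) / 2`, and the choice
`T² = (1-s) (M² / (1-u) + d log ((1-u) / (1-s)))` makes `c_T` equal to twice this lower bound.
The ratio is therefore at most `3T`, and `√(a + b) ≤ √a + √b` gives the stated form with `C = 3`.
-/

section GaussianIntegral

variable {V : Type*} [NormedAddCommGroup V] [InnerProductSpace ℝ V] [FiniteDimensional ℝ V]
  [MeasurableSpace V] [BorelSpace V]

lemma integrable_exp_neg_mul_norm_sub_sq {b : ℝ} (hb : 0 < b) (c : V) :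
    Integrable (fun z : V => rexp (-b * ‖z - c‖ ^ 2)) := by
  refine Integrable.comp_sub_right (f := fun z : V => rexp (-b * ‖z‖ ^ 2)) ?_ c
  refine (GaussianFourier.integrable_cexp_neg_mul_sq_norm_add (b := (b : ℂ))
    (by simpa using hb) 0 (0 : V)).norm.congr (.of_forall fun z => ?_)
  simp [Complex.norm_exp, ← Complex.ofReal_pow]

lemma integral_exp_neg_mul_norm_sub_sq {b : ℝ} (hb : 0 < b) (c : V) :
    ∫ z : V, rexp (-b * ‖z - c‖ ^ 2) = (π / b) ^ (Module.finrank ℝ V / 2 : ℝ) := by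
  rw [integral_sub_right_eq_self (fun z => rexp (-b * ‖z‖ ^ 2)) c,
    GaussianFourier.integral_rexp_neg_mul_sq_norm hb]

end GaussianIntegral

section Tonelli

variable {α β : Type*} [MeasurableSpace α] [MeasurableSpace β] {μ : Measure α} {ν : Measure β}
  [SFinite μ] [SFinite ν]

lemma integrable_prod_of_nonneg {f : α × β → ℝ} (hf : AEStronglyMeasurable f (μ.prod ν))
    (hf0 : 0 ≤ f) (hslice : ∀ x, Integrable (fun y => f (y, x)) μ)
    (hint : Integrable (fun x => ∫ y, f (y, x) ∂μ) ν) : Integrable f (μ.prod ν) := by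
  refine (integrable_prod_iff' hf).2 ⟨.of_forall hslice, hint.congr (.of_forall fun x => ?_)⟩
  simp_rw [Real.norm_of_nonneg (hf0 _)]

end Tonelli

section TailBound

variable {c T t : ℝ}

lemma mul_exp_neg_sq_div_le_of_le (hc : 0 < c) (hT : c ≤ T ^ 2) (hT0 : 0 < T) (hTt : T ≤ t) :
    t * rexp (-t ^ 2 / (2 * c)) ≤ T * rexp (-T ^ 2 / (2 * c)) := by
  have hratio : t ≤ T * rexp ((t ^ 2 - T ^ 2) / (2 * c)) := calc
    t = T * (1 + (t - T) / T) := by field_simp; ring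
    _ ≤ T * rexp ((t - T) / T) := by gcongr; linarith [add_one_le_exp ((t - T) / T)]
    _ ≤ T * rexp ((t ^ 2 - T ^ 2) / (2 * c)) := by
        gcongr T * ?_
        refine exp_le_exp.2 ?_
        rw [div_le_div_iff₀ hT0 (by positivity)]
        have h := sub_nonneg.2 hTt
        nlinarith [mul_le_mul_of_nonneg_left hT h, mul_nonneg (mul_nonneg h h) hT0.le]
  calc t * rexp (-t ^ 2 / (2 * c))
      ≤ T * rexp ((t ^ 2 - T ^ 2) / (2 * c)) * rexp (-t ^ 2 / (2 * c)) := by gcongr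
    _ = T * rexp (-T ^ 2 / (2 * c)) := by rw [mul_assoc, ← exp_add]; congr 2; ring

lemma mul_exp_neg_sq_div_le (hc : 0 < c) (hT : c ≤ T ^ 2) (hT0 : 0 < T) (t : ℝ) :
    t * rexp (-t ^ 2 / (2 * c)) ≤ T * rexp (-T ^ 2 / (2 * c)) + T * rexp (-t ^ 2 / (2 * c)) := by
  rcases le_total t T with htT | hTt
  · nlinarith [exp_pos (-T ^ 2 / (2 * c)), exp_pos (-t ^ 2 / (2 * c))]
  · nlinarith [mul_exp_neg_sq_div_le_of_le hc hT hT0 hTt, exp_pos (-t ^ 2 / (2 * c))]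

end TailBound

lemma rpow_mul_exp_neg_eq {a b : ℝ} (ha : 0 < a) (hb : 0 < b) (d : ℕ) (M : ℝ) :
    (2 * π * a) ^ (-(d : ℝ) / 2) * rexp (-(a * (M ^ 2 / b + d * log (b / a))) / (2 * a)) =
      (2 * π * b) ^ (-(d : ℝ) / 2) * rexp (-M ^ 2 / (2 * b)) := by
  have hexp : -(a * (M ^ 2 / b + d * log (b / a))) / (2 * a) =
      log (b / a) * (-(d : ℝ) / 2) + -M ^ 2 / (2 * b) := by
    field_simp
    ring
  rw [hexp, exp_add, ← rpow_def_of_pos (by positivity), ← mul_assoc,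
    ← mul_rpow (by positivity) (by positivity), mul_assoc, mul_div_cancel₀ _ ha.ne']

lemma sqrt_add_le_add_sqrt {a b : ℝ} (ha : 0 ≤ a) (hb : 0 ≤ b) : √(a + b) ≤ √a + √b := by
  rw [sqrt_le_left (by positivity), add_sq, sq_sqrt ha, sq_sqrt hb]
  nlinarith [sqrt_nonneg a, sqrt_nonneg b]

section GaussKernel

variable {d : ℕ} {s t u v T : ℝ}

lemma gaussKernel_nonneg (ht : t ≤ 1) (y x : EuclideanSpace ℝ (Fin d)) :
    0 ≤ gaussKernel d t y x := by
  have : 0 ≤ 2 * π * (1 - t) := by nlinarith [pi_pos]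
  unfold gaussKernel
  positivity

lemma gaussKernel_le (ht : t ≤ 1) (y x : EuclideanSpace ℝ (Fin d)) :
    gaussKernel d t y x ≤ (2 * π * (1 - t)) ^ (-(d : ℝ) / 2) := by
  have : 0 ≤ 2 * π * (1 - t) := by nlinarith [pi_pos]
  refine mul_le_of_le_one_right (by positivity) (exp_le_one_iff.2 ?_)
  exact div_nonpos_of_nonpos_of_nonneg (by simp) (by linarith)

lemma continuous_gaussKernel (t : ℝ) :
    Continuous fun z : EuclideanSpace ℝ (Fin d) × EuclideanSpace ℝ (Fin d) =>
      gaussKernel d t z.1 z.2 := by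
  unfold gaussKernel
  fun_prop

lemma gaussKernel_eq_mul_exp (t : ℝ) (y x : EuclideanSpace ℝ (Fin d)) :
    gaussKernel d t y x = (2 * π * (1 - t)) ^ (-(d : ℝ) / 2) *
      rexp (-(2 * (1 - t))⁻¹ * ‖y - √t • x‖ ^ 2) := by
  simp only [gaussKernel, neg_mul, ← div_eq_inv_mul, neg_div]

lemma integrable_gaussKernel_left (ht : t < 1) (x : EuclideanSpace ℝ (Fin d)) :
    Integrable fun y => gaussKernel d t y x := by
  have : 0 < (2 * (1 - t))⁻¹ := by simp; linarith
  simp_rw [gaussKernel_eq_mul_exp]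
  exact (integrable_exp_neg_mul_norm_sub_sq this _).const_mul _

lemma integral_gaussKernel_left (ht : t < 1) (x : EuclideanSpace ℝ (Fin d)) :
    ∫ y, gaussKernel d t y x = 1 := by
  have h : 0 < 2 * π * (1 - t) := by nlinarith [pi_pos]
  have : 0 < (2 * (1 - t))⁻¹ := by simp; linarith
  simp_rw [gaussKernel_eq_mul_exp]
  rw [integral_const_mul, integral_exp_neg_mul_norm_sub_sq this, finrank_euclideanSpace_fin,
    div_inv_eq_mul, ← mul_assoc, mul_comm π, neg_div, rpow_neg h.le, inv_mul_cancel₀]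
  exact (rpow_pos_of_pos h _).ne'

lemma norm_sq_div_add_norm_sq_div (hs0 : 0 ≤ s) (hs1 : s < 1) (hv0 : 0 ≤ v) (hv1 : v < 1)
    (x y y' : EuclideanSpace ℝ (Fin d)) :
    ‖y' - √v • x‖ ^ 2 / (2 * (1 - v)) + ‖y - √s • y'‖ ^ 2 / (2 * (1 - s))
      = (1 - s * v) / (2 * (1 - v) * (1 - s)) *
          ‖y' - (((1 - s) * √v / (1 - s * v)) • x + ((1 - v) * √s / (1 - s * v)) • y)‖ ^ 2
        + ‖y - √(s * v) • x‖ ^ 2 / (2 * (1 - s * v)) := by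
  have hsv : 1 - s * v ≠ 0 := by nlinarith
  have hs : 1 - s ≠ 0 := by linarith
  have hv : 1 - v ≠ 0 := by linarith
  obtain ⟨a, ha, rfl⟩ : ∃ a, 0 ≤ a ∧ a ^ 2 = v := ⟨√v, sqrt_nonneg _, sq_sqrt hv0⟩
  obtain ⟨b, hb, rfl⟩ : ∃ b, 0 ≤ b ∧ b ^ 2 = s := ⟨√s, sqrt_nonneg _, sq_sqrt hs0⟩
  have hsv' : 1 - a ^ 2 * b ^ 2 ≠ 0 := by rwa [mul_comm]
  simp only [← mul_pow, sqrt_sq ha, sqrt_sq hb, sqrt_sq (mul_nonneg hb ha)]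
  simp only [norm_sub_sq_real, norm_add_sq_real, real_inner_smul_right, real_inner_smul_left,
    inner_add_right, norm_smul, Real.norm_eq_abs, mul_pow, sq_abs]
  rw [real_inner_comm y' y, real_inner_comm y x]
  field_simp
  ring

lemma integral_gaussKernel_mul_gaussKernel (hs0 : 0 ≤ s) (hs1 : s < 1) (hv0 : 0 ≤ v)
    (hv1 : v < 1) (x y : EuclideanSpace ℝ (Fin d)) :
    ∫ y', gaussKernel d v y' x * gaussKernel d s y y' = gaussKernel d (s * v) y x := by
  have hs : 0 < 1 - s := by linarith
  have hv : 0 < 1 - v := by linarith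
  have hsv : 0 < 1 - s * v := by nlinarith
  set b := (1 - s * v) / (2 * (1 - v) * (1 - s)) with hb
  set m := ((1 - s) * √v / (1 - s * v)) • x + ((1 - v) * √s / (1 - s * v)) • y with hm
  set E := ‖y - √(s * v) • x‖ ^ 2 / (2 * (1 - s * v)) with hE
  have hprod : ∀ y', gaussKernel d v y' x * gaussKernel d s y y' =
      ((2 * π * (1 - v)) ^ (-(d : ℝ) / 2) * (2 * π * (1 - s)) ^ (-(d : ℝ) / 2) * rexp (-E)) *
        rexp (-b * ‖y' - m‖ ^ 2) := by
    intro y'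
    have := norm_sq_div_add_norm_sq_div hs0 hs1 hv0 hv1 x y y'
    rw [← hb, ← hm, ← hE] at this
    rw [gaussKernel, gaussKernel, mul_mul_mul_comm, ← exp_add, mul_assoc _ (rexp (-E)),
      ← exp_add]
    congr 2
    linear_combination -this
  have hπb : π / b = 2 * π * (1 - v) * (2 * π * (1 - s)) / (2 * π * (1 - s * v)) := by
    rw [hb]
    field_simp
  simp_rw [hprod]
  rw [integral_const_mul, integral_exp_neg_mul_norm_sub_sq (by positivity),
    finrank_euclideanSpace_fin, hπb, gaussKernel, ← neg_div]
  have h1 : 0 < 2 * π * (1 - v) := by positivity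
  have h2 : 0 < 2 * π * (1 - s) := by positivity
  have h3 : 0 < 2 * π * (1 - s * v) := by positivity
  rw [div_rpow (by positivity) h3.le, mul_rpow h1.le h2.le]
  simp only [neg_div, rpow_neg h1.le, rpow_neg h2.le, rpow_neg h3.le]
  have := (rpow_pos_of_pos h1 ((d : ℝ) / 2)).ne'
  have := (rpow_pos_of_pos h2 ((d : ℝ) / 2)).ne'
  have := (rpow_pos_of_pos h3 ((d : ℝ) / 2)).ne'
  field_simp

lemma norm_mul_gaussKernel_le (hs : s < 1) (hT : 1 - s ≤ T ^ 2) (hT0 : 0 < T)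
    (y y' : EuclideanSpace ℝ (Fin d)) :
    ‖y - √s • y'‖ * gaussKernel d s y y' ≤ T * gaussKernel d s y y' +
      T * ((2 * π * (1 - s)) ^ (-(d : ℝ) / 2) * rexp (-T ^ 2 / (2 * (1 - s)))) := by
  have hC : 0 ≤ (2 * π * (1 - s)) ^ (-(d : ℝ) / 2) := rpow_nonneg (by nlinarith [pi_pos]) _
  have h := mul_le_mul_of_nonneg_left
    (mul_exp_neg_sq_div_le (by linarith) hT hT0 ‖y - √s • y'‖) hC
  unfold gaussKernel
  linear_combination h

section Smoothed

variable {p : EuclideanSpace ℝ (Fin d) → ℝ}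

lemma integrable_mul_gaussKernel {f : EuclideanSpace ℝ (Fin d) → ℝ} (hf : Integrable f)
    (ht : t ≤ 1) (y : EuclideanSpace ℝ (Fin d)) :
    Integrable fun x => f x * gaussKernel d t y x := by
  refine hf.mul_bdd (c := (2 * π * (1 - t)) ^ (-(d : ℝ) / 2))
    ((continuous_gaussKernel t).comp (.prodMk_right y)).aestronglyMeasurable
    (.of_forall fun x => ?_)
  rw [Real.norm_of_nonneg (gaussKernel_nonneg ht y x)]
  exact gaussKernel_le ht y x

lemma smoothed_nonneg (hp0 : 0 ≤ p) (ht : t ≤ 1) (y : EuclideanSpace ℝ (Fin d)) :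
    0 ≤ smoothed d p t y :=
  integral_nonneg fun x => mul_nonneg (hp0 x) (gaussKernel_nonneg ht y x)

lemma integrable_prod_mul_gaussKernel (hp0 : 0 ≤ p) (hp : Integrable p) (ht : t < 1) :
    Integrable (fun z : EuclideanSpace ℝ (Fin d) × EuclideanSpace ℝ (Fin d) =>
      p z.2 * gaussKernel d t z.1 z.2) (volume.prod volume) := by
  refine integrable_prod_of_nonneg
    (hp.aestronglyMeasurable.comp_snd.mul (continuous_gaussKernel t).aestronglyMeasurable)
    (fun z => mul_nonneg (hp0 _) (gaussKernel_nonneg ht.le _ _))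
    (fun x => (integrable_gaussKernel_left ht x).const_mul (p x)) ?_
  simpa only [integral_const_mul, integral_gaussKernel_left ht, mul_one] using hp

lemma integrable_smoothed (hp0 : 0 ≤ p) (hp : Integrable p) (ht : t < 1) :
    Integrable (smoothed d p t) :=
  (integrable_prod_mul_gaussKernel hp0 hp ht).integral_prod_left

lemma integral_smoothed (hp0 : 0 ≤ p) (hp : Integrable p) (ht : t < 1) :
    ∫ y, smoothed d p t y = ∫ x, p x := by
  unfold smoothed
  rw [integral_integral_swap (f := fun y x => p x * gaussKernel d t y x)
    (integrable_prod_mul_gaussKernel hp0 hp ht)]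
  simp only [integral_const_mul, integral_gaussKernel_left ht, mul_one]

lemma integrable_prod_mul_gaussKernel_mul_gaussKernel (hp0 : 0 ≤ p) (hp : Integrable p)
    (hs0 : 0 ≤ s) (hs1 : s < 1) (hv0 : 0 ≤ v) (hv1 : v < 1) (y : EuclideanSpace ℝ (Fin d)) :
    Integrable (fun z : EuclideanSpace ℝ (Fin d) × EuclideanSpace ℝ (Fin d) =>
      p z.2 * (gaussKernel d v z.1 z.2 * gaussKernel d s y z.1)) (volume.prod volume) := by
  refine integrable_prod_of_nonneg
    (hp.aestronglyMeasurable.comp_snd.mul ((continuous_gaussKernel v).aestronglyMeasurable.mul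
      ((continuous_gaussKernel s).comp (.prodMk_right y)).aestronglyMeasurable.comp_fst))
    (fun z => mul_nonneg (hp0 _)
      (mul_nonneg (gaussKernel_nonneg hv1.le _ _) (gaussKernel_nonneg hs1.le _ _)))
    (fun x => (integrable_mul_gaussKernel (integrable_gaussKernel_left hv1 x) hs1.le y).const_mul
      (p x)) ?_
  simpa only [integral_const_mul, integral_gaussKernel_mul_gaussKernel hs0 hs1 hv0 hv1]
      using integrable_mul_gaussKernel hp (by nlinarith) y

lemma smoothed_mul_gaussKernel (p : EuclideanSpace ℝ (Fin d) → ℝ) (s v : ℝ)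
    (y y' : EuclideanSpace ℝ (Fin d)) :
    smoothed d p v y' * gaussKernel d s y y' =
      ∫ x, p x * (gaussKernel d v y' x * gaussKernel d s y y') := by
  simp only [smoothed, ← integral_mul_const, mul_assoc]

lemma integrable_smoothed_mul_gaussKernel (hp0 : 0 ≤ p) (hp : Integrable p)
    (hs0 : 0 ≤ s) (hs1 : s < 1) (hv0 : 0 ≤ v) (hv1 : v < 1) (y : EuclideanSpace ℝ (Fin d)) :
    Integrable fun y' => smoothed d p v y' * gaussKernel d s y y' := by
  simp_rw [smoothed_mul_gaussKernel]
  exact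
    (integrable_prod_mul_gaussKernel_mul_gaussKernel hp0 hp hs0 hs1 hv0 hv1 y).integral_prod_left

lemma integral_smoothed_mul_gaussKernel (hp0 : 0 ≤ p) (hp : Integrable p)
    (hs0 : 0 ≤ s) (hs1 : s < 1) (hv0 : 0 ≤ v) (hv1 : v < 1) (y : EuclideanSpace ℝ (Fin d)) :
    ∫ y', smoothed d p v y' * gaussKernel d s y y' = smoothed d p (s * v) y := by
  simp_rw [smoothed_mul_gaussKernel]
  rw [integral_integral_swap (f := fun y' x => p x * (gaussKernel d v y' x * gaussKernel d s y y'))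
    (integrable_prod_mul_gaussKernel_mul_gaussKernel hp0 hp hs0 hs1 hv0 hv1 y)]
  simp only [integral_const_mul, integral_gaussKernel_mul_gaussKernel hs0 hs1 hv0 hv1]
  rfl

lemma mul_exp_le_gaussKernel (hu : u ≤ 1) {R : ℝ} {x : EuclideanSpace ℝ (Fin d)} (hx : ‖x‖ < R)
    (y : EuclideanSpace ℝ (Fin d)) :
    (2 * π * (1 - u)) ^ (-(d : ℝ) / 2) * rexp (-(‖y‖ + √u * R) ^ 2 / (2 * (1 - u))) ≤
      gaussKernel d u y x := by
  have : 0 ≤ 2 * π * (1 - u) := by nlinarith [pi_pos]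
  have hdist : ‖y - √u • x‖ ≤ ‖y‖ + √u * R := calc
    ‖y - √u • x‖ ≤ ‖y‖ + ‖√u • x‖ := norm_sub_le _ _
    _ ≤ ‖y‖ + √u * R := by rw [norm_smul, Real.norm_of_nonneg (sqrt_nonneg u)]; gcongr
  unfold gaussKernel
  gcongr

lemma mul_setIntegral_le_smoothed (hp0 : 0 ≤ p) (hp : Integrable p) (hu : u ≤ 1) (R : ℝ)
    (y : EuclideanSpace ℝ (Fin d)) :
    (2 * π * (1 - u)) ^ (-(d : ℝ) / 2) * rexp (-(‖y‖ + √u * R) ^ 2 / (2 * (1 - u))) *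
        ∫ x in {x : EuclideanSpace ℝ (Fin d) | ‖x‖ < R}, p x ≤ smoothed d p u y := by
  rw [← integral_const_mul]
  calc _ ≤ ∫ x in {x : EuclideanSpace ℝ (Fin d) | ‖x‖ < R}, p x * gaussKernel d u y x :=
        setIntegral_mono_on (hp.integrableOn.const_mul _)
          (integrable_mul_gaussKernel hp hu y).integrableOn
          (measurableSet_lt (by fun_prop) measurable_const) fun x hx => by
            rw [mul_comm]
            exact mul_le_mul_of_nonneg_left (mul_exp_le_gaussKernel hu hx y) (hp0 x)
    _ ≤ smoothed d p u y :=
        setIntegral_le_integral (integrable_mul_gaussKernel hp hu y)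
          (.of_forall fun x => mul_nonneg (hp0 x) (gaussKernel_nonneg hu y x))

noncomputable def backwardKernel (d : ℕ) (p : EuclideanSpace ℝ (Fin d) → ℝ) (u v : ℝ)
    (y y' : EuclideanSpace ℝ (Fin d)) : ℝ :=
  smoothed d p v y' * gaussKernel d (u / v) y y' / smoothed d p u y

lemma integral_norm_mul_smoothed_mul_gaussKernel_le (hp0 : 0 ≤ p) (hp : Integrable p)
    (hp1 : ∫ x, p x = 1) (hs0 : 0 ≤ s) (hs1 : s < 1) (hv0 : 0 ≤ v) (hv1 : v < 1)
    (hT : 1 - s ≤ T ^ 2) (hT0 : 0 < T) (y : EuclideanSpace ℝ (Fin d)) :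
    ∫ y', ‖y - √s • y'‖ * (smoothed d p v y' * gaussKernel d s y y') ≤
      T * smoothed d p (s * v) y +
        T * ((2 * π * (1 - s)) ^ (-(d : ℝ) / 2) * rexp (-T ^ 2 / (2 * (1 - s)))) := by
  set c := T * ((2 * π * (1 - s)) ^ (-(d : ℝ) / 2) * rexp (-T ^ 2 / (2 * (1 - s))))
  have hK := integrable_smoothed_mul_gaussKernel hp0 hp hs0 hs1 hv0 hv1 y
  have hq := integrable_smoothed hp0 hp hv1
  calc ∫ y', ‖y - √s • y'‖ * (smoothed d p v y' * gaussKernel d s y y')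
      ≤ ∫ y', T * (smoothed d p v y' * gaussKernel d s y y') + c * smoothed d p v y' := by
        refine integral_mono_of_nonneg (.of_forall fun y' => ?_)
          ((hK.const_mul T).add (hq.const_mul c)) (.of_forall fun y' => ?_)
        · exact mul_nonneg (norm_nonneg _)
            (mul_nonneg (smoothed_nonneg hp0 hv1.le y') (gaussKernel_nonneg hs1.le y y'))
        · have := mul_le_mul_of_nonneg_left (norm_mul_gaussKernel_le hs1 hT hT0 y y')
            (smoothed_nonneg hp0 hv1.le y')
          linear_combination this
    _ = T * smoothed d p (s * v) y + c := by
        rw [integral_add (hK.const_mul T) (hq.const_mul c), integral_const_mul, integral_const_mul,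
          integral_smoothed_mul_gaussKernel hp0 hp hs0 hs1 hv0 hv1, integral_smoothed hp0 hp hv1,
          hp1, mul_one]

lemma integral_norm_mul_backwardKernel_le (hp0 : 0 ≤ p) (hp : Integrable p)
    (hp1 : ∫ x, p x = 1) {R : ℝ}
    (hmass : 1 / 2 ≤ ∫ x in {x : EuclideanSpace ℝ (Fin d) | ‖x‖ < R}, p x)
    (hu0 : 0 < u) (huv : u < v) (hv1 : v < 1) (y : EuclideanSpace ℝ (Fin d))
    (hW : 1 ≤ (‖y‖ + √u * R) ^ 2 / (1 - u) + d * log ((1 - u) / (1 - u / v))) :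
    ∫ y', ‖y - √(u / v) • y'‖ * backwardKernel d p u v y y' ≤
      3 * √((1 - u / v) * ((‖y‖ + √u * R) ^ 2 / (1 - u) + d * log ((1 - u) / (1 - u / v)))) := by
  have hv0 : 0 < v := hu0.trans huv
  have hs0 : 0 ≤ u / v := by positivity
  have hs1 : u / v < 1 := (div_lt_one hv0).2 huv
  set W := (‖y‖ + √u * R) ^ 2 / (1 - u) + d * log ((1 - u) / (1 - u / v))
  set T := √((1 - u / v) * W)
  have hT2 : T ^ 2 = (1 - u / v) * W := sq_sqrt (by nlinarith)
  have hT0 : 0 < T := sqrt_pos.2 (by nlinarith)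
  set q₀ := (2 * π * (1 - u)) ^ (-(d : ℝ) / 2) * rexp (-(‖y‖ + √u * R) ^ 2 / (2 * (1 - u)))
  have hq₀ : 0 < q₀ := by
    have : 0 < 1 - u := by linarith
    positivity
  have hQ : q₀ / 2 ≤ smoothed d p u y := by
    have := mul_setIntegral_le_smoothed hp0 hp (huv.trans hv1).le R y
    nlinarith
  have hc : (2 * π * (1 - u / v)) ^ (-(d : ℝ) / 2) * rexp (-T ^ 2 / (2 * (1 - u / v))) = q₀ := by
    rw [hT2]
    exact rpow_mul_exp_neg_eq (by linarith) (by linarith) d _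
  have hnum := integral_norm_mul_smoothed_mul_gaussKernel_le hp0 hp hp1 hs0 hs1 hv0.le hv1
    (by nlinarith) hT0 y
  rw [hc, div_mul_cancel₀ u hv0.ne'] at hnum
  simp_rw [backwardKernel, mul_div_assoc', integral_div]
  rw [div_le_iff₀ (by linarith)]
  nlinarith

end Smoothed

end GaussKernel

section Reweighted

variable {d : ℕ} {p₀ r : EuclideanSpace ℝ (Fin d) → ℝ}

lemma reweighted_nonneg (hp₀ : 0 ≤ p₀) (hr : 0 ≤ r) (hZ : 0 ≤ ∫ x, r x * p₀ x) :
    0 ≤ reweighted d p₀ r :=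
  fun x => div_nonneg (mul_nonneg (hr x) (hp₀ x)) hZ

lemma integrable_reweighted (hrp : Integrable fun x => r x * p₀ x) :
    Integrable (reweighted d p₀ r) :=
  hrp.div_const _

lemma integral_reweighted (hZ : ∫ x, r x * p₀ x ≠ 0) : ∫ x, reweighted d p₀ r x = 1 := by
  simp only [reweighted]
  rw [integral_div, div_self hZ]

end Reweighted

/-- First-moment bound on the backward kernel of the reward-reweighted
forward process: there is a universal constant `C > 0` such that for all `0 < u < v < 1`
with `(1−u)·v/(v−u) ≥ e` and all `y`,
`∫ ‖y − √(u/v)·y′‖ B^r(y′|y) dy′ ≤ C·√(1−u/v)·((‖y‖+√u·R)/√(1−u) + √(d·log((1−u)v/(v−u))))`. -/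
theorem stmt_5 :
    ∃ C : ℝ, 0 < C ∧
      ∀ (d : ℕ), 1 ≤ d →
      ∀ p₀ r : EuclideanSpace ℝ (Fin d) → ℝ,
        IsDensity p₀ → Measurable r → (∀ x, 0 ≤ r x) →
        (0 < ∫ x, r x * p₀ x) → Integrable (fun x => r x * p₀ x) →
      ∀ R : ℝ, 0 < R →
        (1 / 2 < ∫ x in {x : EuclideanSpace ℝ (Fin d) | ‖x‖ < R}, reweighted d p₀ r x) →
      ∀ u v : ℝ, 0 < u → u < v → v < 1 → Real.exp 1 ≤ (1 - u) * v / (v - u) →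
      ∀ y : EuclideanSpace ℝ (Fin d),
        (∫ y', ‖y - Real.sqrt (u / v) • y'‖ *
            (smoothed d (reweighted d p₀ r) v y' * gaussKernel d (u / v) y y' /
              smoothed d (reweighted d p₀ r) u y)) ≤
          C * Real.sqrt (1 - u / v) *
            ((‖y‖ + Real.sqrt u * R) / Real.sqrt (1 - u) +
              Real.sqrt (d * Real.log ((1 - u) * v / (v - u)))) := by
  refine ⟨3, by norm_num, ?_⟩
  intro d hd p₀ r hp₀ _ hr hZ hrp R _ hmass u v hu0 huv hv1 hA y
  have h1u : 0 < 1 - u := by linarith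
  have hA' : (1 - u) * v / (v - u) = (1 - u) / (1 - u / v) := by
    field_simp [(hu0.trans huv).ne']
  have hL : 1 ≤ log ((1 - u) * v / (v - u)) :=
    (le_log_iff_exp_le (by linarith [exp_pos 1])).2 hA
  have hdL : 1 ≤ d * log ((1 - u) * v / (v - u)) :=
    one_le_mul_of_one_le_of_one_le (by exact_mod_cast hd) hL
  set M := ‖y‖ + √u * R
  have hM : M ^ 2 / (1 - u) = (M / √(1 - u)) ^ 2 := by rw [div_pow, sq_sqrt h1u.le]
  calc _ ≤ 3 * √((1 - u / v) * (M ^ 2 / (1 - u) + d * log ((1 - u) * v / (v - u)))) := by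
        rw [hA']
        refine integral_norm_mul_backwardKernel_le (reweighted_nonneg hp₀.2.1 hr hZ.le)
          (integrable_reweighted hrp) (integral_reweighted hZ.ne') hmass.le hu0 huv hv1 y ?_
        rw [← hA']
        linarith [div_nonneg (sq_nonneg M) h1u.le]
    _ ≤ _ := by
        rw [sqrt_mul (by linarith [(div_lt_one (hu0.trans huv)).2 huv]), mul_assoc, hM]
        gcongr
        exact (sqrt_add_le_add_sqrt (sq_nonneg _) (by linarith)).trans_eq
          (by rw [sqrt_sq (by positivity)])
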